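/- Define D₂(P,Q) = ‖μ_P−μ_Q‖_{Σ_Q^{-1}} + ‖μ_P−μ_Q‖_{Σ_P^{-1}}. Suppose all terms of D(P,Q) and D(Q,K) are at most ε (in particular ‖Σ_K^{-1/2}Σ_QΣ_K^{-1/2}−I‖_F ≤ ε, ‖Σ_P^{-1/2}Σ_QΣ_P^{-1/2}−I‖_F ≤ ε, ‖μ_P−μ_Q‖_{Σ_Q^{-1}} ≤ ε, ‖μ_Q−μ_K‖_{Σ_Q^{-1}} ≤ ε). Then D₂(P,K) ≤ D₂(P,Q) + D₂(Q,K) + 2ε + 2ε√(1+ε). -/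

import Mathlib

open Matrix MeasureTheory

/-- Frobenius norm `‖A‖_F = √(tr (Aᵀ A))`. -/
noncomputable def frob {d : ℕ} (A : Matrix (Fin d) (Fin d) ℝ) : ℝ :=
  Real.sqrt (Matrix.trace (Aᵀ * A))

/-- Elliptic norm `‖x‖_A = √(xᵀ A x)`. -/
noncomputable def enorm' {d : ℕ} (A : Matrix (Fin d) (Fin d) ℝ) (x : Fin d → ℝ) : ℝ :=
  Real.sqrt (x ⬝ᵥ A.mulVec x)

open scoped ComplexOrder in
/-- The positive semidefinite square root of a positive semidefinite matrix, as defined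
in the older Mathlib (`Matrix.PosSemidef.sqrt`, since removed). -/
noncomputable def Matrix.PosSemidef.sqrt {n : Type*} [Fintype n] [DecidableEq n] {𝕜 : Type*}
    [RCLike 𝕜] {A : Matrix n n 𝕜} (hA : A.PosSemidef) : Matrix n n 𝕜 :=
  hA.1.eigenvectorUnitary.1 * diagonal ((↑) ∘ (√·) ∘ hA.1.eigenvalues) *
  (star hA.1.eigenvectorUnitary : Matrix n n 𝕜)

/-- `D₂(P,Q) = ‖μ_P − μ_Q‖_{Σ_Q⁻¹} + ‖μ_P − μ_Q‖_{Σ_P⁻¹}`. -/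
noncomputable def D2 {d : ℕ} (μP μQ : Fin d → ℝ) (SP SQ : Matrix (Fin d) (Fin d) ℝ) : ℝ :=
  enorm' SQ⁻¹ (μP - μQ) + enorm' SP⁻¹ (μP - μQ)

/-! The Frobenius norm dominates the operator norm, so
`‖Σ_B^{-1/2} Σ_A Σ_B^{-1/2} - I‖_F ≤ ε` gives `Σ_A ⪯ (1 + ε) Σ_B` in the Loewner order, hence
`Σ_B⁻¹ ⪯ (1 + ε) Σ_A⁻¹` and `‖x‖_{Σ_B⁻¹} ≤ √(1 + ε) ‖x‖_{Σ_A⁻¹}`. Expanding `μ_P - μ_K` through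
`μ_Q` with the triangle inequality in the `Σ_K⁻¹`- and `Σ_P⁻¹`-norms leaves the cross terms
`‖μ_P - μ_Q‖_{Σ_K⁻¹}` and `‖μ_Q - μ_K‖_{Σ_P⁻¹}`, each at most `√(1 + ε) ε` by this comparison. -/

namespace Matrix.PosSemidef

open scoped ComplexOrder

variable {n : Type*} [Fintype n] [DecidableEq n] {𝕜 : Type*} [RCLike 𝕜] {A : Matrix n n 𝕜}

lemma sqrt_mul_self (hA : A.PosSemidef) : hA.sqrt * hA.sqrt = A := by
  conv_rhs => rw [hA.1.spectral_theorem, Unitary.conjStarAlgAut_apply]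
  have hU : (star hA.1.eigenvectorUnitary : Matrix n n 𝕜) * hA.1.eigenvectorUnitary = 1 :=
    Unitary.coe_star_mul_self _
  rw [Matrix.PosSemidef.sqrt, show ∀ a b c e f g : Matrix n n 𝕜,
    a * b * c * (e * f * g) = a * b * (c * e) * f * g from by intros; simp only [Matrix.mul_assoc],
    hU, Matrix.mul_one, Matrix.mul_assoc (hA.1.eigenvectorUnitary : Matrix n n 𝕜),
    diagonal_mul_diagonal]
  congr 2
  refine congrArg diagonal (funext fun i => ?_)
  simp only [Function.comp]
  rw [← RCLike.ofReal_mul, Real.mul_self_sqrt (hA.eigenvalues_nonneg i)]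

lemma posSemidef_sqrt (hA : A.PosSemidef) : hA.sqrt.PosSemidef := by
  have hD : (diagonal (((↑) ∘ (√·) ∘ hA.1.eigenvalues) : n → 𝕜)).PosSemidef := by
    rw [posSemidef_diagonal_iff]
    intro i
    simp only [Function.comp]
    exact_mod_cast Real.sqrt_nonneg _
  rw [Matrix.PosSemidef.sqrt, star_eq_conjTranspose]
  exact hD.mul_mul_conjTranspose_same _

lemma transpose_sqrt {B : Matrix n n ℝ} (hB : B.PosSemidef) : hB.sqrtᵀ = hB.sqrt := by
  simpa using hB.posSemidef_sqrt.isHermitian.eq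

end Matrix.PosSemidef

lemma Matrix.trace_transpose_mul_self {n : Type*} [Fintype n] (N : Matrix n n ℝ) :
    trace (Nᵀ * N) = ∑ i, ∑ j, N i j ^ 2 := by
  simp only [trace, diag, mul_apply, transpose_apply, sq]
  exact Finset.sum_comm

lemma Matrix.mulVec_dotProduct_mulVec_mulVec {n : Type*} [Fintype n] (S M : Matrix n n ℝ)
    (z : n → ℝ) : (S *ᵥ z) ⬝ᵥ M *ᵥ (S *ᵥ z) = z ⬝ᵥ (Sᵀ * M * S) *ᵥ z := by
  rw [dotProduct_mulVec, vecMul_mulVec, ← dotProduct_mulVec, mulVec_mulVec]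

section EllipticNorm

variable {d : ℕ}

lemma dotProduct_mulVec_le_frob_mul (N : Matrix (Fin d) (Fin d) ℝ) (y : Fin d → ℝ) :
    y ⬝ᵥ N *ᵥ y ≤ frob N * (y ⬝ᵥ y) := by
  -- Cauchy–Schwarz over index pairs, pairing `N` with the rank-one matrix `y yᵀ`.
  have hcs := Real.sum_mul_le_sqrt_mul_sqrt Finset.univ (fun p : Fin d × Fin d => N p.1 p.2)
    (fun p => y p.1 * y p.2)
  have hy : ∑ p : Fin d × Fin d, (y p.1 * y p.2) ^ 2 = (y ⬝ᵥ y) ^ 2 := by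
    rw [sq, dotProduct, Finset.sum_mul_sum, Fintype.sum_prod_type]
    exact Finset.sum_congr rfl fun i _ => Finset.sum_congr rfl fun j _ => by ring
  have hyy : 0 ≤ y ⬝ᵥ y := Finset.sum_nonneg fun i _ => mul_self_nonneg (y i)
  rw [hy, Real.sqrt_sq hyy] at hcs
  simp only [Fintype.sum_prod_type] at hcs
  rw [frob, trace_transpose_mul_self]
  convert hcs using 1
  simp only [dotProduct, mulVec, Finset.mul_sum]
  exact Finset.sum_congr rfl fun i _ => Finset.sum_congr rfl fun j _ => by ring

lemma dotProduct_mulVec_le_one_add_mul_of_frob_le {A B : Matrix (Fin d) (Fin d) ℝ}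
    (hB : B.PosDef) {ε : ℝ}
    (h : frob ((hB.posSemidef.sqrt)⁻¹ * A * (hB.posSemidef.sqrt)⁻¹ - 1) ≤ ε) (z : Fin d → ℝ) :
    z ⬝ᵥ A *ᵥ z ≤ (1 + ε) * (z ⬝ᵥ B *ᵥ z) := by
  set S := hB.posSemidef.sqrt
  have hSS : S * S = B := hB.posSemidef.sqrt_mul_self
  have hST : Sᵀ = S := hB.posSemidef.transpose_sqrt
  have hS : IsUnit S.det :=
    (isUnit_iff_isUnit_det S).mp (isUnit_of_mul_isUnit_left (hSS ▸ hB.isUnit))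
  set y := S *ᵥ z
  have hAy : z ⬝ᵥ A *ᵥ z = y ⬝ᵥ (S⁻¹ * A * S⁻¹) *ᵥ y := by
    rw [mulVec_dotProduct_mulVec_mulVec, hST, ← Matrix.mul_assoc, ← Matrix.mul_assoc,
      mul_nonsing_inv _ hS, Matrix.one_mul, Matrix.mul_assoc, nonsing_inv_mul _ hS,
      Matrix.mul_one]
  have hBy : z ⬝ᵥ B *ᵥ z = y ⬝ᵥ y := by
    simpa only [one_mulVec, hST, Matrix.mul_one, hSS] using
      (mulVec_dotProduct_mulVec_mulVec S 1 z).symm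
  have hyy : 0 ≤ y ⬝ᵥ y := Finset.sum_nonneg fun i _ => mul_self_nonneg (y i)
  have hM := dotProduct_mulVec_le_frob_mul (S⁻¹ * A * S⁻¹ - 1) y
  rw [sub_mulVec, one_mulVec, dotProduct_sub, ← hAy] at hM
  rw [hBy]
  linarith [mul_le_mul_of_nonneg_right h hyy]

lemma enorm'_nonneg (A : Matrix (Fin d) (Fin d) ℝ) (x : Fin d → ℝ) : 0 ≤ enorm' A x :=
  Real.sqrt_nonneg _

-- Explicit instances: `Fin d → ℝ` already carries the sup norm globally.
lemma norm_toSeminormedAddCommGroup_eq_enorm' {A : Matrix (Fin d) (Fin d) ℝ}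
    (hA : A.PosSemidef) (x : Fin d → ℝ) :
    @norm _ (A.toSeminormedAddCommGroup hA).toNorm x = enorm' A x := by
  rw [enorm', dotProduct_comm]
  rfl

lemma abs_dotProduct_mulVec_le_enorm'_mul {A : Matrix (Fin d) (Fin d) ℝ} (hA : A.PosSemidef)
    (x y : Fin d → ℝ) : |x ⬝ᵥ A *ᵥ y| ≤ enorm' A x * enorm' A y := by
  have hcs := @abs_real_inner_le_norm _ (A.toSeminormedAddCommGroup hA)
    (A.toInnerProductSpace hA) x y
  rw [norm_toSeminormedAddCommGroup_eq_enorm', norm_toSeminormedAddCommGroup_eq_enorm'] at hcs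
  rw [dotProduct_comm]
  exact hcs

lemma enorm'_add_le {A : Matrix (Fin d) (Fin d) ℝ} (hA : A.PosSemidef) (x y : Fin d → ℝ) :
    enorm' A (x + y) ≤ enorm' A x + enorm' A y := by
  simpa only [norm_toSeminormedAddCommGroup_eq_enorm'] using
    @norm_add_le _ (A.toSeminormedAddCommGroup hA).toSeminormedAddGroup x y

lemma enorm'_sub_le_add {A : Matrix (Fin d) (Fin d) ℝ} (hA : A.PosSemidef) (x y z : Fin d → ℝ) :
    enorm' A (x - z) ≤ enorm' A (x - y) + enorm' A (y - z) := by
  simpa only [sub_add_sub_cancel] using enorm'_add_le hA (x - y) (y - z)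

lemma enorm'_inv_le_sqrt_mul_of_forall_le {A B : Matrix (Fin d) (Fin d) ℝ} (hA : A.PosDef)
    (hB : B.PosDef) {c : ℝ} (h : ∀ z, z ⬝ᵥ A *ᵥ z ≤ c * (z ⬝ᵥ B *ᵥ z)) (x : Fin d → ℝ) :
    enorm' B⁻¹ x ≤ √c * enorm' A⁻¹ x := by
  -- `xᵀB⁻¹x = uᵀAw` for `u = B⁻¹x`, `w = A⁻¹x`; apply Cauchy–Schwarz for the form of `A`.
  set u := B⁻¹ *ᵥ x
  set w := A⁻¹ *ᵥ x
  have hBu : B *ᵥ u = x := by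
    rw [mulVec_mulVec, mul_nonsing_inv _ hB.det_pos.ne'.isUnit, one_mulVec]
  have hAw : A *ᵥ w = x := by
    rw [mulVec_mulVec, mul_nonsing_inv _ hA.det_pos.ne'.isUnit, one_mulVec]
  have hq : 0 ≤ x ⬝ᵥ B⁻¹ *ᵥ x := by simpa using hB.inv.posSemidef.dotProduct_mulVec_nonneg x
  set t := enorm' B⁻¹ x
  have ht : t ^ 2 = u ⬝ᵥ A *ᵥ w := by
    rw [hAw, dotProduct_comm]
    exact Real.sq_sqrt hq
  have hw : enorm' A w = enorm' A⁻¹ x := by rw [enorm', enorm', hAw, dotProduct_comm]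
  have hu : enorm' A u ≤ √c * t :=
    calc enorm' A u ≤ √(c * (u ⬝ᵥ B *ᵥ u)) := Real.sqrt_le_sqrt (h u)
      _ = √c * t := by rw [hBu, dotProduct_comm, Real.sqrt_mul' c hq]; rfl
  have hcs : t ^ 2 ≤ √c * t * enorm' A⁻¹ x :=
    calc t ^ 2 ≤ enorm' A u * enorm' A w :=
          ht ▸ (le_abs_self _).trans (abs_dotProduct_mulVec_le_enorm'_mul hA.posSemidef u w)
      _ ≤ √c * t * enorm' A⁻¹ x := by
          rw [hw]; exact mul_le_mul_of_nonneg_right hu (Real.sqrt_nonneg _)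
  nlinarith [enorm'_nonneg B⁻¹ x, mul_nonneg (Real.sqrt_nonneg c) (enorm'_nonneg A⁻¹ x)]

lemma enorm'_inv_le_sqrt_one_add_mul_of_frob_le {A B : Matrix (Fin d) (Fin d) ℝ}
    (hA : A.PosDef) (hB : B.PosDef) {ε : ℝ}
    (h : frob ((hB.posSemidef.sqrt)⁻¹ * A * (hB.posSemidef.sqrt)⁻¹ - 1) ≤ ε) (x : Fin d → ℝ) :
    enorm' B⁻¹ x ≤ √(1 + ε) * enorm' A⁻¹ x :=
  enorm'_inv_le_sqrt_mul_of_forall_le hA hB (dotProduct_mulVec_le_one_add_mul_of_frob_le hB h) x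

end EllipticNorm

theorem stmt14_general {d : ℕ} (μP μQ μK : Fin d → ℝ)
    {SP SQ SK : Matrix (Fin d) (Fin d) ℝ}
    (hP : SP.PosDef) (hQ : SQ.PosDef) (hK : SK.PosDef) (ε : ℝ)
    (h2 : frob ((hP.posSemidef.sqrt)⁻¹ * SQ * (hP.posSemidef.sqrt)⁻¹ - 1) ≤ ε)
    (h3 : frob ((hK.posSemidef.sqrt)⁻¹ * SQ * (hK.posSemidef.sqrt)⁻¹ - 1) ≤ ε)
    (h5 : enorm' SQ⁻¹ (μP - μQ) ≤ ε)
    (h8 : enorm' SQ⁻¹ (μQ - μK) ≤ ε) :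
    D2 μP μK SP SK ≤ D2 μP μQ SP SQ + D2 μQ μK SQ SK
      + 2 * ε + 2 * ε * Real.sqrt (1 + ε) := by
  have hε : 0 ≤ ε := (enorm'_nonneg _ _).trans h5
  have hPQ_K : enorm' SK⁻¹ (μP - μQ) ≤ √(1 + ε) * ε :=
    (enorm'_inv_le_sqrt_one_add_mul_of_frob_le hQ hK h3 _).trans
      (mul_le_mul_of_nonneg_left h5 (Real.sqrt_nonneg _))
  have hQK_P : enorm' SP⁻¹ (μQ - μK) ≤ √(1 + ε) * ε :=
    (enorm'_inv_le_sqrt_one_add_mul_of_frob_le hQ hP h2 _).trans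
      (mul_le_mul_of_nonneg_left h8 (Real.sqrt_nonneg _))
  have hK_tri := enorm'_sub_le_add hK.inv.posSemidef μP μQ μK
  have hP_tri := enorm'_sub_le_add hP.inv.posSemidef μP μQ μK
  unfold D2
  linarith [enorm'_nonneg SQ⁻¹ (μP - μQ), enorm'_nonneg SQ⁻¹ (μQ - μK)]

theorem stmt14 {d : ℕ} (μP μQ μK : Fin d → ℝ)
    {SP SQ SK : Matrix (Fin d) (Fin d) ℝ}
    (hP : SP.PosDef) (hQ : SQ.PosDef) (hK : SK.PosDef) (ε : ℝ)
    (h1 : frob ((hQ.posSemidef.sqrt)⁻¹ * SP * (hQ.posSemidef.sqrt)⁻¹ - 1) ≤ ε)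
    (h2 : frob ((hP.posSemidef.sqrt)⁻¹ * SQ * (hP.posSemidef.sqrt)⁻¹ - 1) ≤ ε)
    (h3 : frob ((hK.posSemidef.sqrt)⁻¹ * SQ * (hK.posSemidef.sqrt)⁻¹ - 1) ≤ ε)
    (h4 : frob ((hQ.posSemidef.sqrt)⁻¹ * SK * (hQ.posSemidef.sqrt)⁻¹ - 1) ≤ ε)
    (h5 : enorm' SQ⁻¹ (μP - μQ) ≤ ε) (h6 : enorm' SP⁻¹ (μP - μQ) ≤ ε)
    (h7 : enorm' SK⁻¹ (μQ - μK) ≤ ε) (h8 : enorm' SQ⁻¹ (μQ - μK) ≤ ε) :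
    D2 μP μK SP SK ≤ D2 μP μQ SP SQ + D2 μQ μK SQ SK
      + 2 * ε + 2 * ε * Real.sqrt (1 + ε) :=
  stmt14_general μP μQ μK hP hQ hK ε h2 h3 h5 h8
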